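/- arXiv:2308.05069 — 4 statements merged into one kernel-verified Lean document; each statement's English description precedes it below -/
import Mathlib

section
/- If F : [0,∞) → [0,∞) satisfies F(0)=0, F is nonnegative, and t ↦ F(t)^{1/p} is concave on [0,∞) for some p > 1, then t ↦ F(t^{1/p}) is also concave on [0,∞). -/
/-!
Put `G = F ^ (1/p)`, so that `F (t ^ (1/p)) = G (t ^ (1/p)) ^ p`. Given `0 ≤ x < y` and
`z = a x + b y`, replace `G` by its secant line `ℓ t = m t + c` through `z ^ (1/p)` and
`y ^ (1/p)`. Concavity puts `G` below `ℓ` at `x ^ (1/p) < z ^ (1/p)`, and `m, c ≥ 0` because a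
nonnegative concave function on `[0, ∞)` is monotone and `ℓ 0 ≥ G 0 ≥ 0`. For such `ℓ` the map
`x ↦ ℓ (x ^ (1/p)) ^ p` is concave by Minkowski's inequality for two weighted points, and this is
the required inequality.
-/

open Set

theorem ConcaveOn.monotoneOn_of_bddBelow_Ici {a : ℝ} {f : ℝ → ℝ} (hf : ConcaveOn ℝ (Ici a) f)
    (hbdd : BddBelow (f '' Ici a)) : MonotoneOn f (Ici a) := by
  obtain ⟨B, hB⟩ := hbdd
  intro x hx y hy hxy
  rcases hxy.eq_or_lt with rfl | hxy
  · exact le_rfl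
  by_contra! hyx
  -- The secant through `x` and `y` has slope `-δ < 0`, and `f` stays below it beyond `y`.
  set δ := (f x - f y) / (y - x) with hδ
  have hδ_pos : 0 < δ := div_pos (by linarith) (by linarith)
  set t := y + (f y - B) / δ + 1
  have hyt : y < t := by
    have : 0 ≤ (f y - B) / δ := div_nonneg (by linarith [hB ⟨y, hy, rfl⟩]) hδ_pos.le
    linarith
  have ht : t ∈ Ici a := le_trans hy hyt.le
  have hslope := hf.slope_anti_adjacent hx ht hxy hyt
  rw [div_le_iff₀ (by linarith), show (f y - f x) / (y - x) = -δ by rw [hδ]; ring] at hslope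
  have hδt : δ * (t - y) = f y - B + δ := by
    simp only [t]; field_simp; ring
  linarith [hB ⟨t, ht, rfl⟩]

theorem Real.weighted_Lp_add_le_two {p : ℝ} (hp : 1 ≤ p) {a b A B C D : ℝ} (ha : 0 ≤ a)
    (hb : 0 ≤ b) (hA : 0 ≤ A) (hB : 0 ≤ B) (hC : 0 ≤ C) (hD : 0 ≤ D) :
    (a * (A + C) ^ p + b * (B + D) ^ p) ^ (1 / p) ≤
      (a * A ^ p + b * B ^ p) ^ (1 / p) + (a * C ^ p + b * D ^ p) ^ (1 / p) := by
  have hweight : ∀ w z : ℝ, 0 ≤ w → 0 ≤ z → (w ^ (1 / p) * z) ^ p = w * z ^ p :=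
    fun w z hw hz => by
      rw [Real.mul_rpow (by positivity) hz, one_div, Real.rpow_inv_rpow hw (by positivity)]
  have := Real.Lp_add_le_of_nonneg Finset.univ (f := ![a ^ (1 / p) * A, b ^ (1 / p) * B])
    (g := ![a ^ (1 / p) * C, b ^ (1 / p) * D]) hp
    (fun i _ => by fin_cases i <;> simp <;> positivity)
    (fun i _ => by fin_cases i <;> simp <;> positivity)
  simp only [Fin.sum_univ_two, Matrix.cons_val_zero, Matrix.cons_val_one, ← mul_add] at this
  rwa [hweight a _ ha (add_nonneg hA hC), hweight b _ hb (add_nonneg hB hD), hweight a A ha hA,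
    hweight b B hb hB, hweight a C ha hC, hweight b D hb hD] at this

theorem concaveOn_mul_rpow_one_div_add_rpow {p m c : ℝ} (hp : 1 ≤ p) (hm : 0 ≤ m) (hc : 0 ≤ c) :
    ConcaveOn ℝ (Ici 0) fun x => (m * x ^ (1 / p) + c) ^ p := by
  refine ⟨convex_Ici 0, fun x hx y hy a b ha hb hab => ?_⟩
  simp only [smul_eq_mul]
  have hp0 : p ≠ 0 := by positivity
  have hx : 0 ≤ x := hx
  have hy : 0 ≤ y := hy
  have hz : 0 ≤ a * x + b * y := by positivity
  have hroot : ∀ t : ℝ, 0 ≤ t → (t ^ (1 / p)) ^ p = t := fun t ht => by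
    rw [one_div, Real.rpow_inv_rpow ht hp0]
  have hpow : ∀ t : ℝ, 0 ≤ t → (m * t ^ (1 / p)) ^ p = m ^ p * t := fun t ht => by
    rw [Real.mul_rpow hm (by positivity), hroot t ht]
  have hM := Real.weighted_Lp_add_le_two hp ha hb (A := m * x ^ (1 / p))
    (B := m * y ^ (1 / p)) (by positivity) (by positivity) hc hc
  have hsum : a * (m ^ p * x) + b * (m ^ p * y) = (m * (a * x + b * y) ^ (1 / p)) ^ p := by
    rw [hpow _ hz]; ring
  rw [hpow x hx, hpow y hy, hsum, ← add_mul, hab, one_mul, one_div,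
    Real.rpow_rpow_inv (by positivity) hp0, Real.rpow_rpow_inv hc hp0, ← one_div] at hM
  calc a * (m * x ^ (1 / p) + c) ^ p + b * (m * y ^ (1 / p) + c) ^ p
      = ((a * (m * x ^ (1 / p) + c) ^ p + b * (m * y ^ (1 / p) + c) ^ p) ^ (1 / p)) ^ p :=
        (hroot _ (by positivity)).symm
    _ ≤ (m * (a * x + b * y) ^ (1 / p) + c) ^ p := by gcongr

theorem ConcaveOn.rpow_comp_rpow_one_div {p : ℝ} (hp : 1 ≤ p) {G : ℝ → ℝ}
    (hG : ConcaveOn ℝ (Ici 0) G) (hG_nonneg : ∀ t ∈ Ici (0 : ℝ), 0 ≤ G t) :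
    ConcaveOn ℝ (Ici 0) fun x => G (x ^ (1 / p)) ^ p := by
  have hmono : MonotoneOn G (Ici 0) :=
    hG.monotoneOn_of_bddBelow_Ici ⟨0, by rintro _ ⟨t, ht, rfl⟩; exact hG_nonneg t ht⟩
  suffices key : ∀ x y a b : ℝ, 0 ≤ x → x < y → 0 < a → 0 < b → a + b = 1 →
      a * G (x ^ (1 / p)) ^ p + b * G (y ^ (1 / p)) ^ p ≤ G ((a * x + b * y) ^ (1 / p)) ^ p by
    refine concaveOn_iff_pairwise_pos.mpr ⟨convex_Ici 0, fun x hx y hy hxy a b ha hb hab => ?_⟩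
    simp only [smul_eq_mul]
    rcases hxy.lt_or_gt with hxy | hyx
    · exact key x y a b hx hxy ha hb hab
    · rw [add_comm (a * x), add_comm (a * _)]
      exact key y x b a hy hyx hb ha (by linarith)
  intro x y a b hx hxy ha hb hab
  have hp0 : 0 < p := by linarith
  set z := a * x + b * y
  have hxz : x < z := by nlinarith
  have hzy : z < y := by nlinarith
  set X := x ^ (1 / p)
  set Y := y ^ (1 / p)
  set Z := z ^ (1 / p)
  have hX : 0 ≤ X := by positivity
  have hXZ : X < Z := Real.rpow_lt_rpow hx hxz (by positivity)
  have hZY : Z < Y := Real.rpow_lt_rpow (by linarith) hzy (by positivity)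
  set m := (G Y - G Z) / (Y - Z)
  set c := G Z - m * Z
  have hm : 0 ≤ m := div_nonneg
    (sub_nonneg.mpr (hmono (mem_Ici.mpr (by linarith)) (mem_Ici.mpr (by linarith)) hZY.le))
    (by linarith)
  have hsecant : ∀ t ∈ Ici (0 : ℝ), t < Z → G t ≤ m * t + c := fun t ht htZ => by
    have h := hG.slope_anti_adjacent ht (mem_Ici.mpr (by linarith)) htZ hZY
    rw [le_div_iff₀ (by linarith)] at h
    linarith
  have hc : 0 ≤ c := by
    have := hsecant 0 self_mem_Ici (by linarith)
    linarith [hG_nonneg 0 self_mem_Ici]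
  have hY : G Y = m * Y + c := by
    have : Y - Z ≠ 0 := sub_ne_zero.mpr hZY.ne'
    simp only [c, m]; field_simp; ring
  calc a * G X ^ p + b * G Y ^ p ≤ a * (m * X + c) ^ p + b * (m * Y + c) ^ p := by
        rw [hY]; gcongr
        · exact hG_nonneg X hX
        · exact hsecant X hX hXZ
    _ ≤ (m * Z + c) ^ p :=
        (concaveOn_mul_rpow_one_div_add_rpow hp hm hc).2 (mem_Ici.mpr hx)
          (mem_Ici.mpr (hx.trans hxy.le)) ha.le hb.le hab
    _ = G Z ^ p := by rw [add_sub_cancel]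

theorem stmt_0_general (p : ℝ) (hp : 1 < p) (F : ℝ → ℝ)
    (hFnn : ∀ t ∈ Ici (0:ℝ), 0 ≤ F t)
    (hconc : ConcaveOn ℝ (Ici (0:ℝ)) (fun t => F t ^ (1/p))) :
    ConcaveOn ℝ (Ici (0:ℝ)) (fun t => F (t ^ (1/p))) := by
  refine (hconc.rpow_comp_rpow_one_div hp.le fun t ht => Real.rpow_nonneg (hFnn t ht) _).congr
    fun t ht => ?_
  simp only [one_div]
  rw [Real.rpow_inv_rpow (hFnn _ (Real.rpow_nonneg ht _)) (by positivity)]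

theorem stmt_0 (p : ℝ) (hp : 1 < p) (F : ℝ → ℝ)
    (hF0 : F 0 = 0) (hFnn : ∀ t ∈ Ici (0:ℝ), 0 ≤ F t)
    (hconc : ConcaveOn ℝ (Ici (0:ℝ)) (fun t => F t ^ (1/p))) :
    ConcaveOn ℝ (Ici (0:ℝ)) (fun t => F (t ^ (1/p))) :=
  stmt_0_general p hp F hFnn hconc
end

section
/- Let H : ℝ^N → [0,∞) be convex and positively p-homogeneous for p > 1. Then H is strictly convex if and only if the sublevel set {z : H(z) ≤ 1} is strictly convex (i.e., for distinct x, y in the set and t ∈ (0,1), H(tx + (1-t)y) < 1). -/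
/-!
Strict convexity of `H` bounds the values on a segment between two points of the sublevel set
`{H ≤ 1}` strictly by `1`. Conversely, write `x = a • u`, `y = b • v` with `H u = H v = 1` and
`a, b ≥ 0`, so that `H x = a ^ p` and `H y = b ^ p`. With `c = t a + (1 - t) b` and `s = t a / c`,
`t • x + (1 - t) • y = c • (s • u + (1 - s) • v)`. If `u ≠ v` the sublevel hypothesis gives
`H (s • u + (1 - s) • v) < 1`, and `c ^ p ≤ t a ^ p + (1 - t) b ^ p` by convexity of `r ↦ r ^ p`;
if `u = v` (which a zero radius allows us to arrange) then `a ≠ b` and the strict convexity of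
`r ↦ r ^ p` does the job.
-/

open Set

variable {E : Type*} [AddCommGroup E] [Module ℝ E] {H : E → ℝ} {p : ℝ}

section Polar

variable (hp : p ≠ 0) (hhom : ∀ t > (0:ℝ), ∀ z, H (t • z) = t ^ p * H z)
include hp hhom

theorem apply_smul_eq_rpow_of_apply_eq_one (h0 : H 0 = 0) {u : E} (hu : H u = 1) {r : ℝ}
    (hr : 0 ≤ r) : H (r • u) = r ^ p := by
  rcases hr.eq_or_lt with rfl | hr
  · rw [zero_smul, h0, Real.zero_rpow hp]
  · rw [hhom r hr, hu, mul_one]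

variable (hnn : ∀ z, 0 ≤ H z) (hzero : ∀ z, H z = 0 ↔ z = 0)
include hnn hzero

theorem exists_apply_eq_one_and_eq_smul {z : E} (hz : z ≠ 0) :
    ∃ u, H u = 1 ∧ z = H z ^ p⁻¹ • u := by
  have hHz : 0 < H z := (hnn z).lt_of_ne' (mt (hzero z).1 hz)
  have hr : 0 < H z ^ p⁻¹ := Real.rpow_pos_of_pos hHz _
  refine ⟨(H z ^ p⁻¹)⁻¹ • z, ?_, ?_⟩
  · rw [hhom _ (inv_pos.2 hr), Real.inv_rpow hr.le, Real.rpow_inv_rpow hHz.le hp,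
      inv_mul_cancel₀ hHz.ne']
  · rw [smul_smul, mul_inv_cancel₀ hr.ne', one_smul]

theorem exists_nonneg_smul_of_apply_eq_one {w : E} (hw : H w = 1) (z : E) :
    ∃ r : ℝ, 0 ≤ r ∧ ∃ u, H u = 1 ∧ z = r • u := by
  rcases eq_or_ne z 0 with rfl | hz
  · exact ⟨0, le_rfl, w, hw, (zero_smul ℝ w).symm⟩
  · obtain ⟨u, hu, hzu⟩ := exists_apply_eq_one_and_eq_smul hp hhom hnn hzero hz
    exact ⟨_, Real.rpow_nonneg (hnn z) _, u, hu, hzu⟩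

end Polar

section ConvexComb

variable (hp : 1 < p) (hhom : ∀ t > (0:ℝ), ∀ z, H (t • z) = t ^ p * H z)
include hp hhom

theorem apply_convexComb_smul_self_lt (h0 : H 0 = 0) {u : E} (hu : H u = 1)
    {a b : ℝ} (ha : 0 ≤ a) (hb : 0 ≤ b) (hab : a ≠ b) {t : ℝ} (ht : t ∈ Ioo (0:ℝ) 1) :
    H (t • (a • u) + (1 - t) • (b • u)) < t * a ^ p + (1 - t) * b ^ p := by
  obtain ⟨ht0, ht1⟩ := ht
  have hc : 0 ≤ t * a + (1 - t) * b := by nlinarith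
  rw [smul_smul, smul_smul, ← add_smul,
    apply_smul_eq_rpow_of_apply_eq_one (by linarith) hhom h0 hu hc]
  simpa only [smul_eq_mul] using
    (strictConvexOn_rpow hp).2 ha hb hab ht0 (sub_pos.2 ht1) (by ring)

variable (hlev : ∀ x y : E, x ≠ y → H x ≤ 1 → H y ≤ 1 →
  ∀ t ∈ Ioo (0:ℝ) 1, H (t • x + (1 - t) • y) < 1)
include hlev

theorem apply_convexComb_smul_lt_of_sublevel {u v : E} (hu : H u = 1) (hv : H v = 1)
    (huv : u ≠ v) {a b : ℝ} (ha : 0 < a) (hb : 0 < b) {t : ℝ} (ht : t ∈ Ioo (0:ℝ) 1) :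
    H (t • (a • u) + (1 - t) • (b • v)) < t * a ^ p + (1 - t) * b ^ p := by
  obtain ⟨ht0, ht1⟩ := ht
  set c := t * a + (1 - t) * b
  have hc : 0 < c := by nlinarith
  set s := t * a / c
  have hs : s ∈ Ioo (0:ℝ) 1 := ⟨by positivity, by rw [div_lt_one hc]; nlinarith⟩
  have hsplit : t • (a • u) + (1 - t) • (b • v) = c • (s • u + (1 - s) • v) := by
    have hcs : c * s = t * a := mul_div_cancel₀ _ hc.ne'
    have hcs' : c * (1 - s) = (1 - t) * b := by rw [mul_sub, hcs]; ring
    rw [smul_add, smul_smul, smul_smul, smul_smul, smul_smul, hcs, hcs']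
  have hcp : c ^ p ≤ t * a ^ p + (1 - t) * b ^ p := by
    simpa only [smul_eq_mul] using
      (convexOn_rpow hp.le).2 ha.le hb.le ht0.le (sub_pos.2 ht1).le (by ring)
  calc H (t • (a • u) + (1 - t) • (b • v))
      = c ^ p * H (s • u + (1 - s) • v) := by rw [hsplit, hhom c hc]
    _ < c ^ p * 1 := by
      gcongr
      exact hlev u v huv hu.le hv.le s hs
    _ ≤ t * a ^ p + (1 - t) * b ^ p := by rwa [mul_one]

theorem apply_convexComb_lt_of_sublevel (h0 : H 0 = 0) {u v : E} (hu : H u = 1) (hv : H v = 1)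
    {a b : ℝ} (ha : 0 ≤ a) (hb : 0 ≤ b) (hne : a • u ≠ b • v) {t : ℝ} (ht : t ∈ Ioo (0:ℝ) 1) :
    H (t • (a • u) + (1 - t) • (b • v)) < t * a ^ p + (1 - t) * b ^ p := by
  rcases ha.eq_or_lt with rfl | ha
  · rw [zero_smul, ← zero_smul ℝ v] at hne ⊢
    exact apply_convexComb_smul_self_lt hp hhom h0 hv le_rfl hb (fun h => hne (h ▸ rfl)) ht
  rcases hb.eq_or_lt with rfl | hb
  · rw [zero_smul, ← zero_smul ℝ u] at hne ⊢
    exact apply_convexComb_smul_self_lt hp hhom h0 hu ha.le le_rfl (fun h => hne (h ▸ rfl)) ht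
  rcases eq_or_ne u v with rfl | huv
  · exact apply_convexComb_smul_self_lt hp hhom h0 hu ha.le hb.le (fun h => hne (h ▸ rfl)) ht
  · exact apply_convexComb_smul_lt_of_sublevel hp hhom hlev hu hv huv ha hb ht

end ConvexComb

theorem stmt_3_general (N : ℕ) (p : ℝ) (hp : 1 < p)
    (H : EuclideanSpace ℝ (Fin N) → ℝ)
    (hnn : ∀ z, 0 ≤ H z)
    (hhom : ∀ t > (0:ℝ), ∀ z, H (t • z) = t ^ p * H z)
    (hzero : ∀ z, H z = 0 ↔ z = 0) :
    (∀ x y : EuclideanSpace ℝ (Fin N), x ≠ y → ∀ t ∈ Set.Ioo (0:ℝ) 1,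
        H (t • x + (1 - t) • y) < t * H x + (1 - t) * H y) ↔
    (∀ x y : EuclideanSpace ℝ (Fin N), x ≠ y → H x ≤ 1 → H y ≤ 1 →
        ∀ t ∈ Set.Ioo (0:ℝ) 1, H (t • x + (1 - t) • y) < 1) := by
  have hp0 : p ≠ 0 := by linarith
  have h0 : H 0 = 0 := (hzero 0).2 rfl
  refine ⟨fun hsc x y hxy hx hy t ht => ?_, fun hlev x y hxy t ht => ?_⟩
  · have := hsc x y hxy t ht
    nlinarith [ht.1, ht.2]
  obtain ⟨w, hw⟩ : ∃ w, H w = 1 := by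
    by_cases hx : x = 0
    · exact (exists_apply_eq_one_and_eq_smul hp0 hhom hnn hzero (hx ▸ hxy.symm)).imp
        fun _ h => h.1
    · exact (exists_apply_eq_one_and_eq_smul hp0 hhom hnn hzero hx).imp fun _ h => h.1
  obtain ⟨a, ha, u, hu, rfl⟩ := exists_nonneg_smul_of_apply_eq_one hp0 hhom hnn hzero hw x
  obtain ⟨b, hb, v, hv, rfl⟩ := exists_nonneg_smul_of_apply_eq_one hp0 hhom hnn hzero hw y
  rw [apply_smul_eq_rpow_of_apply_eq_one hp0 hhom h0 hu ha,
    apply_smul_eq_rpow_of_apply_eq_one hp0 hhom h0 hv hb]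
  exact apply_convexComb_lt_of_sublevel hp hhom hlev h0 hu hv ha hb hxy ht

theorem stmt_3 (N : ℕ) (hN : 1 ≤ N) (p : ℝ) (hp : 1 < p)
    (H : EuclideanSpace ℝ (Fin N) → ℝ)
    (hconv : ConvexOn ℝ Set.univ H) (hcont : Continuous H) (hnn : ∀ z, 0 ≤ H z)
    (hhom : ∀ t > (0:ℝ), ∀ z, H (t • z) = t ^ p * H z)
    (hzero : ∀ z, H z = 0 ↔ z = 0) :
    (∀ x y : EuclideanSpace ℝ (Fin N), x ≠ y → ∀ t ∈ Set.Ioo (0:ℝ) 1,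
        H (t • x + (1 - t) • y) < t * H x + (1 - t) * H y) ↔
    (∀ x y : EuclideanSpace ℝ (Fin N), x ≠ y → H x ≤ 1 → H y ≤ 1 →
        ∀ t ∈ Set.Ioo (0:ℝ) 1, H (t • x + (1 - t) • y) < 1) :=
  stmt_3_general N p hp H hnn hhom hzero
end

section
/- Let H ∈ C²(ℝ^N \ {0}) be positively p-homogeneous (p > 1) with λ|z|^{p-2}|v|² ≤ (D²H(z)v, v) ≤ Λ|z|^{p-2}|v|² for all z ≠ 0 and v ∈ ℝ^N. Then H^{2/p} is strongly elliptic: there exist constants 0 < λ̂ ≤ Λ̂ depending only on H and p such that λ̂|v|² ≤ (D²H^{2/p}(z)v, v) ≤ Λ̂|v|² for all z ≠ 0 and v ∈ ℝ^N. -/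
open InnerProductSpace Topology Filter
open scoped RealInnerProductSpace

/-!
Euler's relations for the `p`-homogeneous `H` give `⟪D²H(z) z, z⟫ = p (p - 1) H(z)` and
`D²H(z) z = (p - 1) ∇H(z)`. Ellipticity applied to the first pins `H(z)` between
`λ |z|^p / (p (p - 1))` and `Λ |z|^p / (p (p - 1))`; Cauchy–Schwarz for the positive form `D²H(z)`
combined with the second gives `(p - 1) ⟪∇H(z), v⟫² ≤ p H(z) ⟪D²H(z) v, v⟫`. With `q = 2 / p`,
`⟪D²(H^q)(z) v, v⟫ = q H^(q-1) ⟪D²H(z) v, v⟫ + q (q - 1) H^(q-2) ⟪∇H(z), v⟫²`, so the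
Cauchy–Schwarz bound traps this form between `q H^(q-1) ⟪D²H(z) v, v⟫` and the same divided by
`p - 1`. Finally `p (q - 1) = 2 - p` makes `H^(q-1) |z|^(p-2) = (H / |z|^p)^(q-1)` bounded above and
below, which cancels the `|z|^(p-2)` of the ellipticity bounds.
-/

lemma rpow_mem_Icc_min_max {a b x : ℝ} (e : ℝ) (ha : 0 < a) (hx : x ∈ Set.Icc a b) :
    x ^ e ∈ Set.Icc (min (a ^ e) (b ^ e)) (max (a ^ e) (b ^ e)) := by
  have hx0 : 0 < x := ha.trans_le hx.1
  rcases le_total 0 e with he | he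
  · exact ⟨min_le_of_left_le (Real.rpow_le_rpow ha.le hx.1 he),
      le_max_of_le_right (Real.rpow_le_rpow hx0.le hx.2 he)⟩
  · exact ⟨min_le_of_right_le (Real.rpow_le_rpow_of_nonpos hx0 hx.2 he),
      le_max_of_le_left (Real.rpow_le_rpow_of_nonpos ha hx.1 he)⟩

lemma div_rpow_two_div_sub_one {h μ p : ℝ} (hh : 0 ≤ h) (hμ : 0 < μ) (hp : p ≠ 0) :
    (h / μ ^ p) ^ (2 / p - 1) = h ^ (2 / p - 1) * μ ^ (p - 2) := by
  have hexp : p * (2 / p - 1) = -(p - 2) := by field_simp; ring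
  rw [Real.div_rpow hh (Real.rpow_nonneg hμ.le p), ← Real.rpow_mul hμ.le, hexp,
    Real.rpow_neg hμ.le, div_inv_eq_mul]

lemma two_div_mul_add_mem_Icc {p x y : ℝ} (hp : 1 < p) (hy : 0 ≤ y)
    (hyx : (p - 1) * y ≤ p * x) :
    2 / p * x + 2 / p * (2 / p - 1) * y ∈
      Set.Icc (min 1 (1 / (p - 1)) * (2 / p * x)) (max 1 (1 / (p - 1)) * (2 / p * x)) := by
  have hp1 : 0 < p - 1 := by linarith
  have hy' : y ≤ p / (p - 1) * x := by rw [div_mul_eq_mul_div, le_div_iff₀ hp1]; linarith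
  -- the extreme value `y = p x / (p - 1)` gives exactly the factor `1 / (p - 1)`
  have hend : 2 / p * x + 2 / p * (2 / p - 1) * (p / (p - 1) * x) =
      1 / (p - 1) * (2 / p * x) := by
    field_simp; ring
  set q := 2 / p with hq
  have hq0 : 0 < q := by positivity
  rcases le_total p 2 with hp2 | hp2
  · have hq1 : 0 ≤ q - 1 := by rw [sub_nonneg, hq, le_div_iff₀ (by linarith)]; linarith
    have hr : 1 ≤ 1 / (p - 1) := by rw [le_div_iff₀ hp1]; linarith
    rw [min_eq_left hr, max_eq_right hr, ← hend, one_mul]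
    have hc : 0 ≤ q * (q - 1) := mul_nonneg hq0.le hq1
    exact ⟨le_add_of_nonneg_right (mul_nonneg hc hy),
      add_le_add_right (mul_le_mul_of_nonneg_left hy' hc) _⟩
  · have hq1 : q - 1 ≤ 0 := by rw [sub_nonpos, hq, div_le_iff₀ (by linarith)]; linarith
    have hr : 1 / (p - 1) ≤ 1 := by rw [div_le_iff₀ hp1]; linarith
    rw [min_eq_right hr, max_eq_left hr, ← hend, one_mul]
    have hc : q * (q - 1) ≤ 0 := mul_nonpos_of_nonneg_of_nonpos hq0.le hq1
    exact ⟨add_le_add_right (mul_le_mul_of_nonpos_left hy' hc) _,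
      add_le_of_nonpos_right (mul_nonpos_of_nonpos_of_nonneg hc hy)⟩

section Euler

variable {E : Type*} [NormedAddCommGroup E] [NormedSpace ℝ E] {H : E → ℝ} {p : ℝ}

theorem fderiv_apply_self_of_homogeneous (hhom : ∀ t > (0:ℝ), ∀ w, H (t • w) = t ^ p * H w)
    {w : E} (hw : DifferentiableAt ℝ H w) : fderiv ℝ H w w = p * H w := by
  have hray : HasDerivAt (fun t : ℝ => H (t • w)) (fderiv ℝ H w w) 1 := by
    have hline : HasDerivAt (fun t : ℝ => t • w) w 1 := by
      simpa using (hasDerivAt_id (1 : ℝ)).smul_const w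
    have hw' : HasFDerivAt H (fderiv ℝ H w) ((1 : ℝ) • w) := by
      rw [one_smul]; exact hw.hasFDerivAt
    exact hw'.comp_hasDerivAt 1 hline
  have hpow : HasDerivAt (fun t : ℝ => t ^ p * H w) (p * 1 ^ (p - 1) * H w) 1 :=
    (Real.hasDerivAt_rpow_const (Or.inl one_ne_zero)).mul_const (H w)
  have heq : (fun t : ℝ => t ^ p * H w) =ᶠ[𝓝 1] fun t => H (t • w) := by
    filter_upwards [lt_mem_nhds one_pos] with t ht using (hhom t ht w).symm
  simpa using (hray.congr_of_eventuallyEq heq).unique hpow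

end Euler

section Hessian

variable {E : Type*} [NormedAddCommGroup E] [InnerProductSpace ℝ E] [CompleteSpace E]
  {H : E → ℝ} {p : ℝ}

theorem inner_fderiv_gradient_comm (hH : Differentiable ℝ H) {z : E}
    (hd2 : DifferentiableAt ℝ (gradient H) z) (v w : E) :
    ⟪fderiv ℝ (gradient H) z v, w⟫ = ⟪fderiv ℝ (gradient H) z w, v⟫ := by
  let L : E →L[ℝ] StrongDual ℝ E := (toDual ℝ E).toContinuousLinearEquiv.toContinuousLinearMap
  simpa [L] using second_derivative_symmetric (f' := fun y => L (gradient H y))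
    (fun y => (hH y).hasGradientAt.hasFDerivAt) (L.hasFDerivAt.comp z hd2.hasFDerivAt) v w

theorem inner_fderiv_gradient_apply_self_of_homogeneous
    (hhom : ∀ t > (0:ℝ), ∀ w, H (t • w) = t ^ p * H w) (hH : Differentiable ℝ H) {z : E}
    (hd2 : DifferentiableAt ℝ (gradient H) z) (v : E) :
    ⟪fderiv ℝ (gradient H) z v, z⟫ = (p - 1) * ⟪gradient H z, v⟫ := by
  have heuler : (fun w => ⟪gradient H w, w⟫) = fun w => p * H w := by
    funext w
    rw [inner_gradient_left, fderiv_apply_self_of_homogeneous hhom (hH w)]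
  have hderiv := congrArg (fun f => fderiv ℝ f z v) heuler
  rw [fderiv_inner_apply ℝ (g := fun w => w) hd2 differentiableAt_fun_id, fderiv_const_mul (hH z),
    fderiv_fun_id, ContinuousLinearMap.id_apply, smul_apply, smul_eq_mul,
    ← inner_gradient_left] at hderiv
  linarith

theorem gradient_rpow {q : ℝ} {w : E} (hw : DifferentiableAt ℝ H w) (hH0 : H w ≠ 0) :
    gradient (fun w => H w ^ q) w = (q * H w ^ (q - 1)) • gradient H w := by
  have hG : HasFDerivAt (fun w => H w ^ q) ((q * H w ^ (q - 1)) • fderiv ℝ H w) w :=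
    (Real.hasDerivAt_rpow_const (Or.inl hH0)).comp_hasFDerivAt w hw.hasFDerivAt
  rw [gradient, hG.fderiv, map_smul]
  rfl

theorem inner_fderiv_gradient_rpow (hH : Differentiable ℝ H) {q : ℝ} {z : E} (hH0 : H z ≠ 0)
    (hd2 : DifferentiableAt ℝ (gradient H) z) (v : E) :
    ⟪fderiv ℝ (gradient fun w => H w ^ q) z v, v⟫ =
      q * (H z ^ (q - 1) * ⟪fderiv ℝ (gradient H) z v, v⟫) +
        q * (q - 1) * (H z ^ (q - 2) * ⟪gradient H z, v⟫ ^ 2) := by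
  have hcoef : HasFDerivAt (fun w => q * H w ^ (q - 1))
      (q • ((q - 1) * H z ^ (q - 2)) • fderiv ℝ H z) z := by
    have h := Real.hasDerivAt_rpow_const (p := q - 1) (Or.inl hH0)
    rw [show q - 1 - 1 = q - 2 by ring] at h
    exact (h.comp_hasFDerivAt z (hH z).hasFDerivAt).const_smul q
  have hgrad : gradient (fun w => H w ^ q) =ᶠ[𝓝 z] fun w => (q * H w ^ (q - 1)) • gradient H w := by
    filter_upwards [(hH z).continuousAt.eventually_ne hH0] with w hw
    exact gradient_rpow (hH w) hw
  rw [((hcoef.smul hd2.hasFDerivAt).congr_of_eventuallyEq hgrad).fderiv]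
  simp only [add_apply, smul_apply, ContinuousLinearMap.smulRight_apply, smul_eq_mul,
    inner_add_left, real_inner_smul_left, ← inner_gradient_left]
  ring

theorem inner_fderiv_gradient_self_of_homogeneous
    (hhom : ∀ t > (0:ℝ), ∀ w, H (t • w) = t ^ p * H w) (hH : Differentiable ℝ H) {z : E}
    (hd2 : DifferentiableAt ℝ (gradient H) z) :
    ⟪fderiv ℝ (gradient H) z z, z⟫ = p * (p - 1) * H z := by
  rw [inner_fderiv_gradient_apply_self_of_homogeneous hhom hH hd2, inner_gradient_left,
    fderiv_apply_self_of_homogeneous hhom (hH z)]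
  ring

theorem sq_inner_gradient_le_of_homogeneous (hp : 1 < p)
    (hhom : ∀ t > (0:ℝ), ∀ w, H (t • w) = t ^ p * H w) (hH : Differentiable ℝ H) {z : E}
    (hd2 : DifferentiableAt ℝ (gradient H) z)
    (hpsd : ∀ u, 0 ≤ ⟪fderiv ℝ (gradient H) z u, u⟫) (v : E) :
    (p - 1) * ⟪gradient H z, v⟫ ^ 2 ≤ p * H z * ⟪fderiv ℝ (gradient H) z v, v⟫ := by
  let B : LinearMap.BilinForm ℝ E := (innerₗ E).comp (fderiv ℝ (gradient H) z : E →ₗ[ℝ] E)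
  have hcs := B.apply_mul_apply_le_of_forall_zero_le hpsd z v
  have hvz := inner_fderiv_gradient_apply_self_of_homogeneous hhom hH hd2 v
  simp only [B, LinearMap.comp_apply, innerₗ_apply_apply, ContinuousLinearMap.coe_coe,
    inner_fderiv_gradient_comm hH hd2 z v, hvz,
    inner_fderiv_gradient_self_of_homogeneous hhom hH hd2] at hcs
  have hp1 : 0 < p - 1 := by linarith
  nlinarith

theorem inner_fderiv_gradient_rpow_two_div_mem_Icc (hp : 1 < p)
    (hhom : ∀ t > (0:ℝ), ∀ w, H (t • w) = t ^ p * H w) (hH : Differentiable ℝ H) {z : E}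
    (hH0 : 0 < H z) (hd2 : DifferentiableAt ℝ (gradient H) z)
    (hpsd : ∀ u, 0 ≤ ⟪fderiv ℝ (gradient H) z u, u⟫) (v : E) :
    ⟪fderiv ℝ (gradient fun w => H w ^ (2 / p)) z v, v⟫ ∈
      Set.Icc (min 1 (1 / (p - 1)) * (2 / p * (H z ^ (2 / p - 1) * ⟪fderiv ℝ (gradient H) z v, v⟫)))
        (max 1 (1 / (p - 1)) * (2 / p * (H z ^ (2 / p - 1) * ⟪fderiv ℝ (gradient H) z v, v⟫))) := by
  rw [inner_fderiv_gradient_rpow hH hH0.ne' hd2]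
  refine two_div_mul_add_mem_Icc hp (by positivity) ?_
  have hpow : H z ^ (2 / p - 2) * H z = H z ^ (2 / p - 1) := by
    rw [← Real.rpow_add_one hH0.ne']; ring_nf
  have := mul_le_mul_of_nonneg_left (sq_inner_gradient_le_of_homogeneous hp hhom hH hd2 hpsd v)
    (Real.rpow_nonneg hH0.le (2 / p - 2))
  calc (p - 1) * (H z ^ (2 / p - 2) * ⟪gradient H z, v⟫ ^ 2)
      = H z ^ (2 / p - 2) * ((p - 1) * ⟪gradient H z, v⟫ ^ 2) := by ring
    _ ≤ H z ^ (2 / p - 2) * (p * H z * ⟪fderiv ℝ (gradient H) z v, v⟫) := this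
    _ = p * (H z ^ (2 / p - 1) * ⟪fderiv ℝ (gradient H) z v, v⟫) := by rw [← hpow]; ring

variable {lam Lam : ℝ}

theorem div_rpow_mem_Icc_of_elliptic (hp : 1 < p)
    (hhom : ∀ t > (0:ℝ), ∀ w, H (t • w) = t ^ p * H w) (hH : Differentiable ℝ H) {z : E}
    (hz : z ≠ 0) (hd2 : DifferentiableAt ℝ (gradient H) z)
    (hell : lam * ‖z‖ ^ (p - 2) * ‖z‖ ^ 2 ≤ ⟪fderiv ℝ (gradient H) z z, z⟫ ∧
      ⟪fderiv ℝ (gradient H) z z, z⟫ ≤ Lam * ‖z‖ ^ (p - 2) * ‖z‖ ^ 2) :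
    H z / ‖z‖ ^ p ∈ Set.Icc (lam / (p * (p - 1))) (Lam / (p * (p - 1))) := by
  have hμ : 0 < ‖z‖ := norm_pos_iff.2 hz
  have hk : 0 < p * (p - 1) := mul_pos (by linarith) (by linarith)
  have hnorm : ‖z‖ ^ (p - 2) * ‖z‖ ^ 2 = ‖z‖ ^ p := by
    rw [← Real.rpow_natCast, ← Real.rpow_add hμ]; norm_num
  rw [mul_assoc, mul_assoc, hnorm, inner_fderiv_gradient_self_of_homogeneous hhom hH hd2] at hell
  rw [Set.mem_Icc, div_le_div_iff₀ hk (by positivity), div_le_div_iff₀ (by positivity) hk]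
  constructor <;> linarith [hell.1, hell.2]

theorem pos_of_elliptic (hp : 1 < p) (hlam : 0 < lam)
    (hhom : ∀ t > (0:ℝ), ∀ w, H (t • w) = t ^ p * H w) (hH : Differentiable ℝ H) {z : E}
    (hz : z ≠ 0) (hd2 : DifferentiableAt ℝ (gradient H) z)
    (hell : lam * ‖z‖ ^ (p - 2) * ‖z‖ ^ 2 ≤ ⟪fderiv ℝ (gradient H) z z, z⟫ ∧
      ⟪fderiv ℝ (gradient H) z z, z⟫ ≤ Lam * ‖z‖ ^ (p - 2) * ‖z‖ ^ 2) : 0 < H z := by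
  have hk : 0 < p * (p - 1) := mul_pos (by linarith) (by linarith)
  exact (div_pos_iff_of_pos_right (Real.rpow_pos_of_pos (norm_pos_iff.2 hz) p)).1
    ((div_pos hlam hk).trans_le (div_rpow_mem_Icc_of_elliptic hp hhom hH hz hd2 hell).1)

theorem rpow_mul_inner_mem_Icc_of_elliptic (hp : 1 < p) (hlam : 0 < lam)
    (hhom : ∀ t > (0:ℝ), ∀ w, H (t • w) = t ^ p * H w) (hH : Differentiable ℝ H) {z : E}
    (hz : z ≠ 0) (hd2 : DifferentiableAt ℝ (gradient H) z)
    (hell : ∀ v, lam * ‖z‖ ^ (p - 2) * ‖v‖ ^ 2 ≤ ⟪fderiv ℝ (gradient H) z v, v⟫ ∧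
      ⟪fderiv ℝ (gradient H) z v, v⟫ ≤ Lam * ‖z‖ ^ (p - 2) * ‖v‖ ^ 2) (v : E) :
    H z ^ (2 / p - 1) * ⟪fderiv ℝ (gradient H) z v, v⟫ ∈
      Set.Icc (min ((lam / (p * (p - 1))) ^ (2 / p - 1)) ((Lam / (p * (p - 1))) ^ (2 / p - 1)) *
          lam * ‖v‖ ^ 2)
        (max ((lam / (p * (p - 1))) ^ (2 / p - 1)) ((Lam / (p * (p - 1))) ^ (2 / p - 1)) *
          Lam * ‖v‖ ^ 2) := by
  have hμ : 0 < ‖z‖ := norm_pos_iff.2 hz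
  have hk : 0 < p * (p - 1) := mul_pos (by linarith) (by linarith)
  have hρ := div_rpow_mem_Icc_of_elliptic hp hhom hH hz hd2 (hell z)
  have hH0 := pos_of_elliptic hp hlam hhom hH hz hd2 (hell z)
  have hLam : 0 < Lam :=
    (div_pos_iff_of_pos_right hk).1 ((div_pos hlam hk).trans_le (hρ.1.trans hρ.2))
  obtain ⟨hlo, hhi⟩ := rpow_mem_Icc_min_max (2 / p - 1) (div_pos hlam hk) hρ
  rw [div_rpow_two_div_sub_one hH0.le hμ (by linarith)] at hlo hhi
  have hr : 0 ≤ H z ^ (2 / p - 1) := Real.rpow_nonneg hH0.le _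
  constructor
  · calc _ ≤ H z ^ (2 / p - 1) * ‖z‖ ^ (p - 2) * lam * ‖v‖ ^ 2 := by gcongr
      _ = H z ^ (2 / p - 1) * (lam * ‖z‖ ^ (p - 2) * ‖v‖ ^ 2) := by ring
      _ ≤ _ := mul_le_mul_of_nonneg_left (hell v).1 hr
  · calc _ ≤ H z ^ (2 / p - 1) * (Lam * ‖z‖ ^ (p - 2) * ‖v‖ ^ 2) :=
          mul_le_mul_of_nonneg_left (hell v).2 hr
      _ = H z ^ (2 / p - 1) * ‖z‖ ^ (p - 2) * Lam * ‖v‖ ^ 2 := by ring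
      _ ≤ _ := by gcongr

end Hessian

theorem stmt_7_general (N : ℕ) (p lam Lam : ℝ) (hp : 1 < p)
    (hlam : 0 < lam) (hLam : lam ≤ Lam)
    (H : EuclideanSpace ℝ (Fin N) → ℝ)
    (hC1 : ContDiff ℝ 1 H)
    (hhom : ∀ t > (0:ℝ), ∀ z, H (t • z) = t ^ p * H z)
    (hd2 : ∀ z : EuclideanSpace ℝ (Fin N), z ≠ 0 →
      DifferentiableAt ℝ (gradient H) z)
    (hell : ∀ z : EuclideanSpace ℝ (Fin N), z ≠ 0 → ∀ v,
      lam * ‖z‖ ^ (p - 2) * ‖v‖ ^ 2 ≤ (inner ℝ (fderiv ℝ (gradient H) z v) v : ℝ) ∧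
      (inner ℝ (fderiv ℝ (gradient H) z v) v : ℝ) ≤ Lam * ‖z‖ ^ (p - 2) * ‖v‖ ^ 2) :
    ∃ lh Lh : ℝ, 0 < lh ∧ lh ≤ Lh ∧
      ∀ z : EuclideanSpace ℝ (Fin N), z ≠ 0 → ∀ v,
        lh * ‖v‖ ^ 2 ≤
          (inner ℝ (fderiv ℝ (gradient (fun w => H w ^ (2 / p))) z v) v : ℝ) ∧
        (inner ℝ (fderiv ℝ (gradient (fun w => H w ^ (2 / p))) z v) v : ℝ) ≤
          Lh * ‖v‖ ^ 2 := by
  have hH : Differentiable ℝ H := hC1.differentiable one_ne_zero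
  have hk : 0 < p * (p - 1) := mul_pos (by linarith) (by linarith)
  set c₁ := (lam / (p * (p - 1))) ^ (2 / p - 1)
  set c₂ := (Lam / (p * (p - 1))) ^ (2 / p - 1)
  have hm : 0 < min 1 (1 / (p - 1)) := lt_min one_pos (one_div_pos.2 (by linarith))
  have hc : 0 < min c₁ c₂ := lt_min (Real.rpow_pos_of_pos (div_pos hlam hk) _)
    (Real.rpow_pos_of_pos (div_pos (hlam.trans_le hLam) hk) _)
  refine ⟨min 1 (1 / (p - 1)) * (2 / p) * (min c₁ c₂ * lam),
    max 1 (1 / (p - 1)) * (2 / p) * (max c₁ c₂ * Lam), by positivity,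
    by gcongr ?_ * _ * (?_ * ?_) <;> exact min_le_max, fun z hz v => ?_⟩
  have hpsd (u) : 0 ≤ ⟪fderiv ℝ (gradient H) z u, u⟫ :=
    (by positivity : 0 ≤ lam * ‖z‖ ^ (p - 2) * ‖u‖ ^ 2).trans (hell z hz u).1
  obtain ⟨hx₁, hx₂⟩ :=
    rpow_mul_inner_mem_Icc_of_elliptic hp hlam hhom hH hz (hd2 z hz) (hell z hz) v
  obtain ⟨hQ₁, hQ₂⟩ := inner_fderiv_gradient_rpow_two_div_mem_Icc hp hhom hH
    (pos_of_elliptic hp hlam hhom hH hz (hd2 z hz) (hell z hz z)) (hd2 z hz) hpsd v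
  constructor
  · calc _ = min 1 (1 / (p - 1)) * (2 / p * (min c₁ c₂ * lam * ‖v‖ ^ 2)) := by ring
      _ ≤ _ := by gcongr
      _ ≤ _ := hQ₁
  · calc _ ≤ _ := hQ₂
      _ ≤ max 1 (1 / (p - 1)) * (2 / p * (max c₁ c₂ * Lam * ‖v‖ ^ 2)) := by gcongr
      _ = _ := by ring

theorem stmt_7 (N : ℕ) (hN : 1 ≤ N) (p lam Lam : ℝ) (hp : 1 < p)
    (hlam : 0 < lam) (hLam : lam ≤ Lam)
    (H : EuclideanSpace ℝ (Fin N) → ℝ)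
    (hnn : ∀ z, 0 ≤ H z) (hzero : ∀ z, H z = 0 ↔ z = 0)
    (hC1 : ContDiff ℝ 1 H)
    (hhom : ∀ t > (0:ℝ), ∀ z, H (t • z) = t ^ p * H z)
    (hd2 : ∀ z : EuclideanSpace ℝ (Fin N), z ≠ 0 →
      DifferentiableAt ℝ (gradient H) z)
    (hell : ∀ z : EuclideanSpace ℝ (Fin N), z ≠ 0 → ∀ v,
      lam * ‖z‖ ^ (p - 2) * ‖v‖ ^ 2 ≤ (inner ℝ (fderiv ℝ (gradient H) z v) v : ℝ) ∧
      (inner ℝ (fderiv ℝ (gradient H) z v) v : ℝ) ≤ Lam * ‖z‖ ^ (p - 2) * ‖v‖ ^ 2)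
    (hd2' : ∀ z : EuclideanSpace ℝ (Fin N), z ≠ 0 →
      DifferentiableAt ℝ (gradient (fun w => H w ^ (2 / p))) z) :
    ∃ lh Lh : ℝ, 0 < lh ∧ lh ≤ Lh ∧
      ∀ z : EuclideanSpace ℝ (Fin N), z ≠ 0 → ∀ v,
        lh * ‖v‖ ^ 2 ≤
          (inner ℝ (fderiv ℝ (gradient (fun w => H w ^ (2 / p))) z v) v : ℝ) ∧
        (inner ℝ (fderiv ℝ (gradient (fun w => H w ^ (2 / p))) z v) v : ℝ) ≤
          Lh * ‖v‖ ^ 2 :=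
  stmt_7_general N p lam Lam hp hlam hLam H hC1 hhom hd2 hell
end

section
/- Let G ∈ C^∞(ℝ^N) satisfy G(0) = 0 and D²G(z) ≥ λ·Id for all z (λ > 0), and let Φ(z) = inf{t > 0 : G(z/t) ≤ 1} be the Minkowski functional of {G ≤ 1}. Then for every z with Φ(z) = 1 and every v with (DΦ(z), v) = 0, one has (D²G(z)v, v) = (DG(z), z)·(D²Φ(z)v, v); in particular (D²Φ(z)v, v) ≥ λ̂|v|² with λ̂ = λ / sup_{G=1}(DG(z), z) > 0. -/
open Set Filter Topology

section Aux
set_option linter.unusedSectionVars false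
variable {E : Type*} [NormedAddCommGroup E] [InnerProductSpace ℝ E] [CompleteSpace E]

lemma inner_grad (f : E → ℝ) (x v : E) : (inner ℝ (gradient f x) v : ℝ) = fderiv ℝ f x v := by
  rw [gradient, ← InnerProductSpace.toDual_apply_apply, LinearIsometryEquiv.apply_symm_apply]

lemma grad_contDiff (f : E → ℝ) (hf : ContDiff ℝ (⊤ : ℕ∞) f) : ContDiff ℝ (⊤ : ℕ∞) (gradient f) := by
  have : gradient f = fun x => (InnerProductSpace.toDual ℝ E).symm (fderiv ℝ f x) := rfl
  rw [this]
  exact ((InnerProductSpace.toDual ℝ E).symm.contDiff).comp (hf.fderiv_right (by simp))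

lemma line_hasDerivAt (x y : E) (t : ℝ) : HasDerivAt (fun s : ℝ => x + s • y) y t := by
  simpa using ((hasDerivAt_id t).smul_const y).const_add x

lemma gauge_level (G : E → ℝ) (hGc : Continuous G) (x : E)
    (hx : gauge {w | G w ≤ 1} x = 1) : G x = 1 := by
  set S : Set ℝ := {r ∈ Set.Ioi (0:ℝ) | r⁻¹ • x ∈ {w | G w ≤ 1}} with hS
  have hgd : sInf S = 1 := by rw [← hx, gauge_def']
  have hne : S.Nonempty := by
    by_contra h
    rw [not_nonempty_iff_eq_empty] at h
    rw [h, Real.sInf_empty] at hgd; norm_num at hgd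
  have hbdd : BddBelow S := ⟨0, fun t ht => le_of_lt ht.1⟩
  have hmem : ∀ t ∈ S, 1 ≤ t := fun t ht => hgd ▸ csInf_le hbdd ht
  have hcont : ContinuousAt (fun r : ℝ => G (r⁻¹ • x)) 1 :=
    hGc.continuousAt.comp ((continuousAt_inv₀ one_ne_zero).smul continuousAt_const)
  have h1 : G x ≤ 1 := by
    by_contra h
    push_neg at h
    have hev : ∀ᶠ r in 𝓝 (1:ℝ), 1 < G (r⁻¹ • x) := by
      have : (fun r : ℝ => G (r⁻¹ • x)) 1 ∈ Ioi (1:ℝ) := by simpa using h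
      exact hcont.eventually_mem (Ioi_mem_nhds (by simpa using h))
    rcases Metric.eventually_nhds_iff.1 hev with ⟨δ, hδ, hball⟩
    have : 1 + δ/2 ≤ sInf S := by
      apply le_csInf hne
      intro t ht
      by_contra hlt
      push_neg at hlt
      have ht1 := hmem t ht
      have : |t - 1| < δ := by rw [abs_sub_lt_iff]; constructor <;> [linarith; linarith]
      have := hball (by simpa [Real.dist_eq] using this)
      exact absurd ht.2 (by simp only [mem_setOf_eq]; linarith)
    rw [hgd] at this; linarith
  have h2 : 1 ≤ G x := by
    by_contra h
    push_neg at h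
    have hev : ∀ᶠ r in 𝓝 (1:ℝ), G (r⁻¹ • x) < 1 :=
      hcont.eventually_mem (Iio_mem_nhds (by simpa using h))
    rcases Metric.eventually_nhds_iff.1 hev with ⟨δ, hδ, hball⟩
    set t := max (1/2) (1 - δ/2) with htdef
    have ht0 : 0 < t := lt_of_lt_of_le (by norm_num) (le_max_left _ _)
    have ht1 : t < 1 := by
      apply max_lt (by norm_num) (by linarith)
    have htδ : |t - 1| < δ := by
      rw [abs_sub_lt_iff]
      constructor
      · linarith
      · have : 1 - δ/2 ≤ t := le_max_right _ _
        linarith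
    have htS : t ∈ S := ⟨ht0, le_of_lt (hball (by simpa [Real.dist_eq] using htδ))⟩
    have := csInf_le hbdd htS
    rw [hgd] at this; linarith
  linarith

lemma strong_ineqs (lam : ℝ) (G : E → ℝ) (hG : ContDiff ℝ (⊤ : ℕ∞) G)
    (hGell : ∀ z v : E, lam * ‖v‖ ^ 2 ≤ (inner ℝ (fderiv ℝ (gradient G) z v) v : ℝ))
    (x y : E) :
    G x + (inner ℝ (gradient G x) y : ℝ) + lam/2 * ‖y‖^2 ≤ G (x + y) ∧
    G (x + y) - G x + lam/2 * ‖y‖^2 ≤ (inner ℝ (gradient G (x + y)) y : ℝ) := by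
  set L : ℝ → E := fun t => x + t • y with hL
  have hLd : ∀ t, HasDerivAt L y t := line_hasDerivAt x y
  set q : ℝ → ℝ := fun t => G (L t) with hq
  set d : ℝ → ℝ := fun t => (inner ℝ (gradient G (L t)) y : ℝ) with hd
  have hqd : ∀ t, HasDerivAt q (d t) t := by
    intro t
    have h1 := ((hG.differentiable (by simp) (L t)).hasFDerivAt).comp_hasDerivAt t (hLd t)
    simp [hq, hd, inner_grad] at h1 ⊢; exact h1
  have hdd : ∀ t, HasDerivAt d ((inner ℝ (fderiv ℝ (gradient G) (L t) y) y : ℝ)) t := by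
    intro t
    have hg : HasDerivAt (fun s => gradient G (L s)) (fderiv ℝ (gradient G) (L t) y) t :=
      (((grad_contDiff G hG).differentiable (by simp) (L t)).hasFDerivAt).comp_hasDerivAt t (hLd t)
    have := (HasDerivAt.inner ℝ hg (hasDerivAt_const t y))
    simp [hd] at this ⊢; exact this
  set s : ℝ → ℝ := fun t => d t - d 0 - lam * ‖y‖^2 * t with hs
  have hsd : ∀ t, HasDerivAt s ((inner ℝ (fderiv ℝ (gradient G) (L t) y) y : ℝ) - lam * ‖y‖^2) t := by
    intro t
    have := ((hdd t).sub_const (d 0)).sub (((hasDerivAt_id t).const_mul (lam * ‖y‖^2)))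
    simp at this; exact this
  have hsmono : Monotone s := by
    apply monotone_of_deriv_nonneg (fun t => (hsd t).differentiableAt)
    intro t
    rw [(hsd t).deriv]
    linarith [hGell (L t) y]
  have hs0 : s 0 = 0 := by simp [hs]
  -- first inequality
  have h1 : q 0 + d 0 + lam/2 * ‖y‖^2 ≤ q 1 := by
    set w : ℝ → ℝ := fun t => q t - d 0 * t - lam * ‖y‖^2 * t^2/2 with hw
    have hwd : ∀ t, HasDerivAt w (s t) t := by
      intro t
      have := ((hqd t).sub ((hasDerivAt_id t).const_mul (d 0))).sub
        (((hasDerivAt_pow 2 t).const_mul (lam * ‖y‖^2)).div_const 2)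
      exact this.congr_deriv (by simp [hs]; ring)
    have hmono : MonotoneOn w (Icc 0 1) := by
      apply monotoneOn_of_deriv_nonneg (convex_Icc 0 1)
        (Differentiable.continuous (fun t => (hwd t).differentiableAt)).continuousOn
        (fun t _ => (hwd t).differentiableAt.differentiableWithinAt)
      intro t ht
      rw [interior_Icc] at ht
      rw [(hwd t).deriv]
      have := hsmono (le_of_lt ht.1)
      rw [hs0] at this; exact this
    have := hmono (by norm_num : (0:ℝ) ∈ Icc (0:ℝ) 1) (by norm_num : (1:ℝ) ∈ Icc (0:ℝ) 1)
      (by norm_num)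
    simp only [hw] at this
    nlinarith [this]
  -- second inequality
  have h2 : q 1 - q 0 + lam/2 * ‖y‖^2 ≤ d 1 := by
    set w : ℝ → ℝ := fun t => d 1 * t - q t + lam * ‖y‖^2 * (1-t)^2/2 with hw
    have hwd : ∀ t, HasDerivAt w (s 1 - s t) t := by
      intro t
      have hp : HasDerivAt (fun t : ℝ => lam * ‖y‖^2 * (1-t)^2/2)
          (lam * ‖y‖^2 * (2 * (1-t) * (-1))/2) t := by
        have hbase : HasDerivAt (fun t : ℝ => 1 - t) (-1) t := by
          simpa using (hasDerivAt_id t).const_sub 1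
        have := (((hbase.pow 2).const_mul (lam * ‖y‖^2)).div_const 2)
        exact this.congr_deriv (by push_cast; ring)
      have := (((hasDerivAt_id t).const_mul (d 1)).sub (hqd t)).add hp
      exact this.congr_deriv (by simp [hs]; ring)
    have hmono : MonotoneOn w (Icc 0 1) := by
      apply monotoneOn_of_deriv_nonneg (convex_Icc 0 1)
        (Differentiable.continuous (fun t => (hwd t).differentiableAt)).continuousOn
        (fun t _ => (hwd t).differentiableAt.differentiableWithinAt)
      intro t ht
      rw [interior_Icc] at ht
      rw [(hwd t).deriv]
      have := hsmono (le_of_lt ht.2)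
      linarith
    have := hmono (by norm_num : (0:ℝ) ∈ Icc (0:ℝ) 1) (by norm_num : (1:ℝ) ∈ Icc (0:ℝ) 1)
      (by norm_num)
    simp only [hw] at this
    nlinarith [this]
  constructor
  · have := h1
    simp only [hq, hd, hL, zero_smul, add_zero, one_smul] at this
    linarith
  · have := h2
    simp only [hq, hd, hL, zero_smul, add_zero, one_smul] at this
    linarith

lemma key_identity (G : E → ℝ) (hG : ContDiff ℝ (⊤ : ℕ∞) G) (Φ : E → ℝ)
    (hPhi : ∀ z, Φ z = gauge {w | G w ≤ 1} z)
    (hPhid : ∀ z : E, z ≠ 0 → DifferentiableAt ℝ Φ z ∧ DifferentiableAt ℝ (gradient Φ) z)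
    (z : E) (hz1 : Φ z = 1) (v : E) (hv : (inner ℝ (gradient Φ z) v : ℝ) = 0) :
    (inner ℝ (fderiv ℝ (gradient G) z v) v : ℝ) =
      (inner ℝ (gradient G z) z : ℝ) * (inner ℝ (fderiv ℝ (gradient Φ) z v) v : ℝ) := by
  have hz0 : z ≠ 0 := by
    intro h
    rw [h, hPhi 0, gauge_zero] at hz1
    norm_num at hz1
  set L : ℝ → E := fun t => z + t • v with hLdef
  have hLd : ∀ t, HasDerivAt L v t := line_hasDerivAt z v
  have hL0 : L 0 = z := by simp [hLdef]
  set φ : ℝ → ℝ := fun t => Φ (L t) with hφdef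
  set d : ℝ → ℝ := fun t => (inner ℝ (gradient Φ (L t)) v : ℝ) with hddef
  have hφd : ∀ t, L t ≠ 0 → HasDerivAt φ (d t) t := by
    intro t ht
    have := ((hPhid (L t) ht).1.hasFDerivAt).comp_hasDerivAt t (hLd t)
    simp [hφdef, hddef, inner_grad] at this ⊢; exact this
  have hφ0 : φ 0 = 1 := by rw [hφdef]; simp only [hL0]; exact hz1
  have hd0 : d 0 = 0 := by rw [hddef]; simp only [hL0]; exact hv
  have hev1 : ∀ᶠ t in 𝓝 0, L t ≠ 0 := by
    have : ContinuousAt L 0 := (hLd 0).differentiableAt.continuousAt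
    exact this.eventually_ne (hL0 ▸ hz0)
  have hφc0 : ContinuousAt φ 0 := (hφd 0 (hL0 ▸ hz0)).differentiableAt.continuousAt
  have hev2 : ∀ᶠ t in 𝓝 0, 0 < φ t := by
    have h1 : φ 0 ∈ Ioi (0:ℝ) := by rw [hφ0]; norm_num
    exact hφc0.eventually_mem (Ioi_mem_nhds (by rw [hφ0]; norm_num))
  set c : ℝ → E := fun t => (φ t)⁻¹ • (L t) with hcdef
  have hc0 : c 0 = z := by rw [hcdef]; simp [hφ0, hL0]
  have hev3 : ∀ᶠ t in 𝓝 0, G (c t) = 1 := by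
    filter_upwards [hev2] with t h2
    have hΦc : gauge {w | G w ≤ 1} (c t) = 1 := by
      rw [hcdef]
      rw [gauge_smul_of_nonneg (inv_nonneg.2 h2.le), ← hPhi (L t)]
      exact inv_mul_cancel₀ (ne_of_gt h2)
    exact gauge_level G hG.continuous _ hΦc
  set cd : ℝ → E := fun t => (φ t)⁻¹ • v + (-(d t) / (φ t)^2) • (L t) with hcddef
  have hcd : ∀ᶠ t in 𝓝 0, HasDerivAt c (cd t) t := by
    filter_upwards [hev1, hev2] with t h1 h2
    have hinv : HasDerivAt (fun t => (φ t)⁻¹) (-(d t) / (φ t)^2) t :=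
      (hφd t h1).inv (ne_of_gt h2)
    exact hinv.smul (hLd t)
  have hF0 : ∀ᶠ t in 𝓝 0, (inner ℝ (gradient G (c t)) (cd t) : ℝ) = 0 := by
    filter_upwards [hev3.eventually_nhds, hcd] with t hconst hct
    have h1 : HasDerivAt (fun u => G (c u)) ((fderiv ℝ G (c t)) (cd t)) t :=
      (hG.differentiable (by simp) (c t)).hasFDerivAt.comp_hasDerivAt t hct
    have h2 : HasDerivAt (fun u => G (c u)) 0 t :=
      (hasDerivAt_const t (1:ℝ)).congr_of_eventuallyEq hconst
    rw [inner_grad]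
    exact h1.unique h2
  -- second derivative data
  set Hp : ℝ := (inner ℝ (fderiv ℝ (gradient Φ) z v) v : ℝ) with hHpdef
  have hdd : HasDerivAt d Hp 0 := by
    have hg : HasDerivAt (fun t => gradient Φ (L t)) (fderiv ℝ (gradient Φ) (L 0) v) 0 :=
      ((hPhid (L 0) (hL0 ▸ hz0)).2.hasFDerivAt).comp_hasDerivAt 0 (hLd 0)
    have := HasDerivAt.inner ℝ hg (hasDerivAt_const 0 v)
    simpa [hddef, hHpdef, hL0] using this
  have hφd0 : HasDerivAt φ 0 0 := by
    have := hφd 0 (hL0 ▸ hz0); rwa [hd0] at this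
  have hcdd : HasDerivAt cd ((-Hp) • z) 0 := by
    have hA : HasDerivAt (fun t => -(d t) / (φ t)^2)
        (((-Hp) * (φ 0)^2 - (-(d 0)) * ((2:ℕ) * φ 0 ^ 1 * 0)) / ((φ 0)^2)^2) 0 :=
      (hdd.neg).div (hφd0.pow 2) (by rw [hφ0]; norm_num)
    have hA' : HasDerivAt (fun t => -(d t) / (φ t)^2) (-Hp) 0 := by
      convert hA using 1
      rw [hφ0, hd0]; norm_num
    have hφne : φ 0 ≠ 0 := by rw [hφ0]; norm_num
    have h1 : HasDerivAt (fun t => (φ t)⁻¹ • v) ((-(0:ℝ) / φ 0 ^ 2) • v) 0 :=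
      (hφd0.inv hφne).smul_const v
    have h2 := hA'.smul (hLd 0)
    refine (h1.add h2).congr_deriv ?_
    rw [hL0, hd0, hφ0]
    simp
  have hcd0v : cd 0 = v := by rw [hcddef]; simp [hd0, hφ0]
  have hc00 : HasDerivAt c v 0 := hcd0v ▸ hcd.self_of_nhds
  have ha : HasDerivAt (fun t => gradient G (c t)) (fderiv ℝ (gradient G) z v) 0 := by
    have := ((grad_contDiff G hG).differentiable (by simp) (c 0)).hasFDerivAt.comp_hasDerivAt 0 hc00
    rwa [hc0] at this
  have hF := HasDerivAt.inner ℝ ha hcdd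
  have hFconst : HasDerivAt (fun t => (inner ℝ (gradient G (c t)) (cd t) : ℝ)) 0 0 :=
    (hasDerivAt_const 0 (0:ℝ)).congr_of_eventuallyEq hF0
  have uniq := hF.unique hFconst
  rw [hc0, hcd0v, real_inner_smul_right] at uniq
  linarith


end Aux

theorem stmt_9 (N : ℕ) (hN : 1 ≤ N) (lam : ℝ) (hlam : 0 < lam)
    (G : EuclideanSpace ℝ (Fin N) → ℝ) (hG : ContDiff ℝ (⊤ : ℕ∞) G) (hG0 : G 0 = 0)
    (hGell : ∀ z v : EuclideanSpace ℝ (Fin N),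
      lam * ‖v‖ ^ 2 ≤ (inner ℝ (fderiv ℝ (gradient G) z v) v : ℝ))
    (Φ : EuclideanSpace ℝ (Fin N) → ℝ)
    (hPhi : ∀ z, Φ z = gauge {w | G w ≤ 1} z)
    (hPhid : ∀ z : EuclideanSpace ℝ (Fin N), z ≠ 0 →
      DifferentiableAt ℝ Φ z ∧ DifferentiableAt ℝ (gradient Φ) z) :
    (∀ z, Φ z = 1 → ∀ v, (inner ℝ (gradient Φ z) v : ℝ) = 0 →
      (inner ℝ (fderiv ℝ (gradient G) z v) v : ℝ) =
        (inner ℝ (gradient G z) z : ℝ) * (inner ℝ (fderiv ℝ (gradient Φ) z v) v : ℝ)) ∧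
    ∃ lh : ℝ,
      lh = lam / sSup ((fun z => (inner ℝ (gradient G z) z : ℝ)) '' {z | G z = 1}) ∧
      0 < lh ∧
      ∀ z, Φ z = 1 → ∀ v, (inner ℝ (gradient Φ z) v : ℝ) = 0 →
        lh * ‖v‖ ^ 2 ≤ (inner ℝ (fderiv ℝ (gradient Φ) z v) v : ℝ) := by
  have hident : ∀ z, Φ z = 1 → ∀ v, (inner ℝ (gradient Φ z) v : ℝ) = 0 →
      (inner ℝ (fderiv ℝ (gradient G) z v) v : ℝ) =
        (inner ℝ (gradient G z) z : ℝ) * (inner ℝ (fderiv ℝ (gradient Φ) z v) v : ℝ) :=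
    fun z hz v hv => key_identity G hG Φ hPhi hPhid z hz v hv
  refine ⟨hident, ?_⟩
  have hGc : Continuous G := hG.continuous
  set f : EuclideanSpace ℝ (Fin N) → ℝ := fun z => (inner ℝ (gradient G z) z : ℝ) with hfdef
  set S : Set (EuclideanSpace ℝ (Fin N)) := {z | G z = 1} with hSdef
  set C : ℝ := ‖gradient G 0‖ with hCdef
  have hC : 0 ≤ C := norm_nonneg _
  have hcoer : ∀ y, lam/2 * ‖y‖^2 - C * ‖y‖ ≤ G y := by
    intro y
    have h1 := (strong_ineqs lam G hG hGell 0 y).1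
    have h2 : -(C * ‖y‖) ≤ (inner ℝ (gradient G 0) y : ℝ) := by
      have := abs_real_inner_le_norm (gradient G 0) y
      rw [abs_le] at this
      exact this.1
    simp only [hG0, zero_add] at h1
    linarith
  have hpos : ∀ y : EuclideanSpace ℝ (Fin N), G y = 1 → 1 + lam/2 * ‖y‖^2 ≤ f y := by
    intro y hy
    have h := (strong_ineqs lam G hG hGell 0 y).2
    simp only [hG0, zero_add] at h
    rw [hy] at h
    linarith
  set R : ℝ := 2*(C+1)/lam + 1 with hRdef
  have hR1 : 1 < R := by
    rw [hRdef]
    have : 0 < 2*(C+1)/lam := by positivity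
    linarith
  have hbig : ∀ y : EuclideanSpace ℝ (Fin N), R ≤ ‖y‖ → 1 < G y := by
    intro y hy
    rw [hRdef] at hy
    have h1 : 2*(C+1)/lam < ‖y‖ := by linarith
    have h2 : 2*(C+1) < lam * ‖y‖ := by
      rw [div_lt_iff₀ hlam] at h1; linarith
    have hy0 : 1 < ‖y‖ := lt_of_lt_of_le hR1 hy
    nlinarith [hcoer y]
  have hSsub : S ⊆ Metric.closedBall 0 R := by
    intro z hz
    rw [Metric.mem_closedBall, dist_zero_right]
    by_contra h
    push_neg at h
    have := hbig z h.le
    rw [hz] at this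
    exact lt_irrefl 1 this
  have hScl : IsClosed S := by
    have : S = G ⁻¹' {1} := rfl
    rw [this]
    exact (isClosed_singleton).preimage hGc
  have hScpt : IsCompact S := (isCompact_closedBall 0 R).of_isClosed_subset hScl hSsub
  -- nonemptiness of S
  obtain ⟨z₀, hz₀⟩ : ∃ z₀, z₀ ∈ S := by
    set e : EuclideanSpace ℝ (Fin N) := EuclideanSpace.single (⟨0, hN⟩ : Fin N) (1:ℝ) with hedef
    have hne : ‖e‖ = 1 := by rw [hedef, EuclideanSpace.norm_single]; norm_num
    set F : ℝ → ℝ := fun t => G (t • e) with hFdef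
    have hFc : Continuous F := hGc.comp (continuous_id.smul continuous_const)
    have hF0 : F 0 = 0 := by rw [hFdef]; simp [hG0]
    have hFR : 1 < F R := by
      apply hbig
      rw [norm_smul, hne, mul_one, Real.norm_eq_abs, abs_of_nonneg (by linarith)]
    have := intermediate_value_Icc (by linarith : (0:ℝ) ≤ R) hFc.continuousOn
    have h1 : (1:ℝ) ∈ Icc (F 0) (F R) := by
      rw [hF0]; exact ⟨by norm_num, hFR.le⟩
    obtain ⟨t, _, ht⟩ := this h1
    exact ⟨t • e, ht⟩
  have hfc : Continuous f := Continuous.inner ((grad_contDiff G hG).continuous) continuous_id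
  have hbdd : BddAbove (f '' S) := hScpt.bddAbove_image hfc.continuousOn
  set M : ℝ := sSup (f '' S) with hMdef
  have hfz₀ : 1 ≤ f z₀ := by
    have := hpos z₀ hz₀
    nlinarith [sq_nonneg ‖z₀‖]
  have hM1 : 1 ≤ M := le_trans hfz₀ (le_csSup hbdd ⟨z₀, hz₀, rfl⟩)
  have hMpos : 0 < M := by linarith
  refine ⟨lam / M, rfl, div_pos hlam hMpos, ?_⟩
  intro z hz v hv
  have hid := hident z hz v hv
  have hGz : G z = 1 := gauge_level G hGc z ((hPhi z).symm.trans hz)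
  have hfzM : f z ≤ M := le_csSup hbdd ⟨z, hGz, rfl⟩
  have hfzpos : 0 < f z := by
    have := hpos z hGz
    nlinarith [sq_nonneg ‖z‖]
  have hell := hGell z v
  rw [hid] at hell
  set Hp : ℝ := (inner ℝ (fderiv ℝ (gradient Φ) z v) v : ℝ) with hHpdef
  have hHp : 0 ≤ Hp := by
    by_contra h
    push_neg at h
    nlinarith [sq_nonneg ‖v‖]
  have : lam * ‖v‖^2 ≤ M * Hp :=
    le_trans hell (mul_le_mul_of_nonneg_right hfzM hHp)
  rw [div_mul_eq_mul_div, div_le_iff₀ hMpos]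
  linarith
end
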